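/- For the split chain of a family of Markov chains satisfying the uniform minorization condition inf_θ P^θ(x,A) ≥ 2δ·1_C(x)·ν(A) with ν(C)=1 and 0<δ<1/2, the atom α = C_1 = C×{1} satisfies: P̌^θ(x̌, α) ≥ δ²/(1−δ) for every x̌ ∈ C_0 ∪ C_1 and every parameter θ. -/

import Mathlib

/-! On `C₁` the split kernel is `ν*`, which gives the atom mass `δ ν(C) = δ`. On `C₀` the
minorization `P(x,·) ≥ 2δ ν` makes `P(x,·) − δν` a measure of mass at least `δ` on `C`;
renormalizing by `1 − δ` and splitting off the fraction `δ` leaves at least `δ²/(1 − δ)` on the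
atom. -/

open MeasureTheory ProbabilityTheory

variable {X : Type*} [MeasurableSpace X]

/-- The splitting `λ*` of a measure `λ` on `X`:
`λ*(A₀) = (1−δ)λ(A∩C) + λ(A∩Cᶜ)`, `λ*(A₁) = δλ(A∩C)`. -/
noncomputable def splitMeasure (C : Set X) (δ : ℝ) (μ0 : Measure X) :
    Measure (X × Bool) :=
  Measure.map (fun x => (x, false))
      (ENNReal.ofReal (1 - δ) • μ0.restrict C + μ0.restrict Cᶜ)
    + Measure.map (fun x => (x, true)) (ENNReal.ofReal δ • μ0.restrict C)

open Classical in
/-- The kernel `Q` of the split-chain construction. -/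
noncomputable def splitQ (P : Kernel X X) (ν : Measure X) (C : Set X) (δ : ℝ)
    (xs : X × Bool) : Measure X :=
  if xs.2 = true then ν
  else if xs.1 ∈ C then
    (ENNReal.ofReal (1 - δ))⁻¹ • ((P xs.1) - ENNReal.ofReal δ • ν)
  else P xs.1

/-- The split (Nummelin) transition kernel `P̌(xs,·) = Q(xs,·)*`. -/
noncomputable def splitKernel (P : Kernel X X) (ν : Measure X) (C : Set X)
    (δ : ℝ) (xs : X × Bool) : Measure (X × Bool) :=
  splitMeasure C δ (splitQ P ν C δ xs)

section SplitAtom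

variable {P : Kernel X X} {ν : Measure X} {C : Set X} {δ : ℝ}

lemma splitMeasure_atom (hC : MeasurableSet C) (μ : Measure X) :
    splitMeasure C δ μ (C ×ˢ {true}) = ENNReal.ofReal δ * μ C := by
  have hm : MeasurableSet (C ×ˢ ({true} : Set Bool)) := hC.prod (by simp)
  rw [splitMeasure, Measure.add_apply,
    Measure.map_apply measurable_prodMk_right hm,
    Measure.map_apply measurable_prodMk_right hm]
  have h_false : (fun x => (x, false)) ⁻¹' (C ×ˢ {true}) = ∅ := by ext x; simp
  have h_true : (fun x => (x, true)) ⁻¹' (C ×ˢ {true}) = C := by ext x; simp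
  simp [h_false, h_true, Measure.restrict_apply_self]

lemma splitKernel_atom_of_true (hC : MeasurableSet C) (x : X) :
    splitKernel P ν C δ (x, true) (C ×ˢ {true}) = ENNReal.ofReal δ * ν C := by
  rw [splitKernel, splitMeasure_atom hC, splitQ, if_pos rfl]

lemma splitKernel_atom_of_false_of_mem [IsFiniteMeasure ν] (hC : MeasurableSet C)
    {x : X} (hx : x ∈ C) (hle : ENNReal.ofReal δ • ν ≤ P x) :
    splitKernel P ν C δ (x, false) (C ×ˢ {true})
      = ENNReal.ofReal δ * ((ENNReal.ofReal (1 - δ))⁻¹ * (P x C - ENNReal.ofReal δ * ν C)) := by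
  have : IsFiniteMeasure (ENNReal.ofReal δ • ν) := ν.smul_finite ENNReal.ofReal_ne_top
  simp only [splitKernel, splitMeasure_atom hC, splitQ, Bool.false_eq_true, if_false, if_pos hx]
  rw [Measure.smul_apply, Measure.sub_apply hC hle, smul_eq_mul, Measure.smul_apply, smul_eq_mul]

lemma smul_le_of_minorization {x : X} {ε : ℝ} (hx : x ∈ C)
    (hminor : ∀ A : Set X, MeasurableSet A →
      ENNReal.ofReal ε * C.indicator 1 x * ν A ≤ P x A) :
    ENNReal.ofReal ε • ν ≤ P x := by
  refine Measure.le_iff.2 fun A hA => ?_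
  simpa [Set.indicator_of_mem hx] using hminor A hA

lemma sq_div_one_sub_le_splitKernel_atom_of_false [IsFiniteMeasure ν] (hC : MeasurableSet C)
    (hνC : ν C = 1) (hδ0 : 0 < δ) (hδ1 : δ < 1) {x : X} (hx : x ∈ C)
    (h2δ : ENNReal.ofReal (2 * δ) • ν ≤ P x) :
    ENNReal.ofReal (δ ^ 2 / (1 - δ)) ≤ splitKernel P ν C δ (x, false) (C ×ˢ {true}) := by
  have hδν : ENNReal.ofReal δ • ν ≤ P x :=
    (IsOrderedSMul.smul_le_smul_right _ _ (ENNReal.ofReal_le_ofReal (by linarith)) ν).trans h2δ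
  have hPC : ENNReal.ofReal δ ≤ P x C - ENNReal.ofReal δ * ν C := by
    rw [hνC, mul_one]
    refine ENNReal.le_sub_of_add_le_right ENNReal.ofReal_ne_top ?_
    rw [← ENNReal.ofReal_add hδ0.le hδ0.le, ← two_mul]
    simpa [hνC] using h2δ C
  have hsq : ENNReal.ofReal (δ ^ 2 / (1 - δ))
      = ENNReal.ofReal δ * ((ENNReal.ofReal (1 - δ))⁻¹ * ENNReal.ofReal δ) := by
    rw [ENNReal.ofReal_div_of_pos (by linarith), div_eq_mul_inv, sq, ENNReal.ofReal_mul hδ0.le]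
    ring
  rw [splitKernel_atom_of_false_of_mem hC hx hδν, hsq]
  gcongr

end SplitAtom

theorem split_atom_uniform_minorization_general
    {Θ : Type*} (P : Θ → Kernel X X)
    (C : Set X) (hC : MeasurableSet C)
    (ν : Measure X) [IsProbabilityMeasure ν] (hνC : ν C = 1)
    (δ : ℝ) (hδ0 : 0 < δ) (hδ : δ < 1 / 2)
    (hminor : ∀ θ, ∀ x, ∀ A : Set X, MeasurableSet A →
      ENNReal.ofReal (2 * δ) * C.indicator 1 x * ν A ≤ (P θ) x A) :
    ∀ θ, ∀ xs ∈ C ×ˢ {false} ∪ C ×ˢ ({true} : Set Bool),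
      ENNReal.ofReal (δ ^ 2 / (1 - δ))
        ≤ splitKernel (P θ) ν C δ xs (C ×ˢ {true}) := by
  rintro θ ⟨x, b⟩ (⟨hx, rfl⟩ | ⟨-, rfl⟩)
  · exact sq_div_one_sub_le_splitKernel_atom_of_false hC hνC hδ0 (by linarith) hx
      (smul_le_of_minorization hx (hminor θ x))
  · rw [splitKernel_atom_of_true hC, hνC, mul_one]
    refine ENNReal.ofReal_le_ofReal ?_
    rw [div_le_iff₀ (by linarith)]
    nlinarith

/-- under the uniform minorization condition, the atom
`α = C×{1}` of the split chain satisfies `P̌^θ(xs, α) ≥ δ²/(1−δ)` for every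
`xs ∈ C₀ ∪ C₁` and every parameter `θ`. -/
theorem split_atom_uniform_minorization
    {Θ : Type*} (P : Θ → Kernel X X) [∀ θ, IsMarkovKernel (P θ)]
    (C : Set X) (hC : MeasurableSet C)
    (ν : Measure X) [IsProbabilityMeasure ν] (hνC : ν C = 1)
    (δ : ℝ) (hδ0 : 0 < δ) (hδ : δ < 1 / 2)
    (hminor : ∀ θ, ∀ x, ∀ A : Set X, MeasurableSet A →
      ENNReal.ofReal (2 * δ) * C.indicator 1 x * ν A ≤ (P θ) x A) :
    ∀ θ, ∀ xs ∈ C ×ˢ {false} ∪ C ×ˢ ({true} : Set Bool),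
      ENNReal.ofReal (δ ^ 2 / (1 - δ))
        ≤ splitKernel (P θ) ν C δ xs (C ×ˢ {true}) :=
  split_atom_uniform_minorization_general P C hC ν hνC δ hδ0 hδ hminor
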